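/- arXiv:2508.20853 — 10 statements merged into one kernel-verified Lean document; each statement's English description precedes it below -/
import Mathlib

section
/- For every n ≥ 2, every element r of S(n) satisfies r ≤ ⌊(n-2)/3⌋. -/
def S (n : ℕ) : Finset ℕ := (Finset.Icc 1 (n / 2)).image (fun k => n % k)

theorem mem_S_le (n : ℕ) (hn : 2 ≤ n) : ∀ r ∈ S n, r ≤ (n - 2) / 3 := by
  intro r hr
  simp only [S, Finset.mem_image, Finset.mem_Icc] at hr
  obtain ⟨k, ⟨hk1, hk2⟩, rfl⟩ := hr
  have hk0 : 0 < k := hk1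
  have h2k : k * 2 ≤ n := (Nat.le_div_iff_mul_le (by norm_num)).mp hk2
  have hdiv : 2 ≤ n / k := (Nat.le_div_iff_mul_le hk0).mpr (by omega)
  have h1 : n % k < k := Nat.mod_lt _ hk0
  have h2 : n % k + 2 * k ≤ n := by
    have := Nat.mod_add_div n k
    nlinarith [Nat.mod_add_div n k]
  rw [Nat.le_div_iff_mul_le (by norm_num)]
  omega
end

section
/- For every n ≥ 1, every nonzero element r of S(n+1) satisfies r - 1 ∈ S(n); equivalently, S(n+1) \ {0} ⊆ { r + 1 : r ∈ S(n) }. -/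
theorem S_succ_sub_zero_subset (n : ℕ) (hn : 1 ≤ n) :
    (S (n + 1)) \ {0} ⊆ (S n).image (fun r => r + 1) := by
  intro r hr
  simp only [Finset.mem_sdiff, Finset.mem_singleton, S, Finset.mem_image,
    Finset.mem_Icc] at hr ⊢
  obtain ⟨⟨k, ⟨hk1, hk2⟩, hrk⟩, hr0⟩ := hr
  have hmod : (n + 1) % k ≠ 0 := by rw [hrk]; exact hr0
  have hk2' : 2 ≤ k := by
    rcases Nat.lt_or_ge k 2 with h | h
    · interval_cases k
      · simp [Nat.mod_one] at hmod
    · exact h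
  have hkle : k ≤ n / 2 := by
    by_contra h
    push_neg at h
    have h1 : n < k * 2 := (Nat.div_lt_iff_lt_mul (by norm_num)).mp h
    have h2 : k * 2 ≤ n + 1 := (Nat.le_div_iff_mul_le (by norm_num)).mp hk2
    have : n + 1 = k * 2 := by omega
    apply hmod
    rw [this]
    simp [Nat.mul_mod_right]
  have hadd : (n + 1) % k = (n % k + 1) % k := by
    conv_lhs => rw [Nat.add_mod]
    rw [Nat.one_mod_eq_one.mpr (by omega)]
  have hlt : n % k < k := Nat.mod_lt _ (by omega)
  have hn1 : n % k + 1 < k := by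
    by_contra h
    push_neg at h
    have : n % k + 1 = k := by omega
    rw [this, Nat.mod_self] at hadd
    exact hmod hadd
  refine ⟨n % k, ⟨k, ⟨by omega, hkle⟩, rfl⟩, ?_⟩
  rw [← hrk, hadd, Nat.mod_eq_of_lt hn1]
end

section
/- For every n ≥ 1, s(n+1) ≤ s(n) + 1, where s(n) denotes the cardinality of S(n). -/
def s (n : ℕ) : ℕ := (S n).card

theorem s_succ_le (n : ℕ) (hn : 1 ≤ n) : s (n + 1) ≤ s n + 1 := by
  have hsub : S (n + 1) ⊆ insert 0 ((S n).image (· + 1)) := by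
    intro x hx
    simp only [S, Finset.mem_image, Finset.mem_Icc] at hx
    obtain ⟨k, ⟨hk1, hk2⟩, rfl⟩ := hx
    by_cases hd : k ∣ (n + 1)
    · simp [Nat.eq_zero_of_dvd_of_lt, Nat.mod_eq_zero_of_dvd hd]
    · have hk0 : 0 < k := hk1
      have hkn : k ≤ n / 2 := by
        by_contra h
        push_neg at h
        have h2 : k * 2 ≤ n + 1 := (Nat.le_div_iff_mul_le (by norm_num)).mp hk2
        have h3 : n < k * 2 := (Nat.div_lt_iff_lt_mul (by norm_num)).mp h
        exact hd ⟨2, by omega⟩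
      have hmlt : n % k < k := Nat.mod_lt n hk0
      rcases eq_or_lt_of_le (Nat.succ_le_of_lt hmlt) with heq | hlt
      · exfalso
        apply hd
        refine ⟨n / k + 1, ?_⟩
        have h := Nat.div_add_mod n k
        rw [Nat.mul_add, Nat.mul_one]
        omega
      · have hk2' : 2 ≤ k := by omega
        have hx : (n + 1) % k = n % k + 1 := by
          rw [Nat.add_mod, Nat.mod_eq_of_lt hk2', Nat.mod_eq_of_lt hlt]
        rw [hx]
        apply Finset.mem_insert_of_mem
        exact Finset.mem_image.mpr ⟨n % k, Finset.mem_image.mpr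
          ⟨k, Finset.mem_Icc.mpr ⟨hk1, hkn⟩, rfl⟩, rfl⟩
  calc s (n + 1) ≤ (insert 0 ((S n).image (· + 1))).card := Finset.card_le_card hsub
    _ ≤ ((S n).image (· + 1)).card + 1 := Finset.card_insert_le _ _
    _ ≤ s n + 1 := by exact Nat.add_le_add_right (Finset.card_image_le) 1
end

section
/- Let n ≥ 2 and 0 ≤ r ≤ ⌊n/2⌋ - 1. Then r ∈ S(n) and r + 1 ∉ S(n+1) if and only if r + 1 is the largest proper divisor of n - r. -/
lemma mem_S_iff (n r : ℕ) (hrn : r ≤ n) :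
    r ∈ S n ↔ ∃ k, k ∣ (n - r) ∧ r < k ∧ k ≤ n / 2 := by
  simp only [S, Finset.mem_image, Finset.mem_Icc]
  constructor
  · rintro ⟨k, ⟨hk1, hk2⟩, rfl⟩
    refine ⟨k, ⟨n / k, ?_⟩, Nat.mod_lt _ (by omega), hk2⟩
    have := Nat.div_add_mod n k
    omega
  · rintro ⟨k, ⟨q, hq⟩, hk1, hk2⟩
    refine ⟨k, ⟨by omega, hk2⟩, ?_⟩
    have hn : n = r + k * q := by omega
    rw [hn, Nat.add_mul_mod_self_left, Nat.mod_eq_of_lt hk1]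

theorem not_transferred_iff (n r : ℕ) (hn : 2 ≤ n) (hr : r ≤ n / 2 - 1) :
    (r ∈ S n ∧ r + 1 ∉ S (n + 1)) ↔
    ((r + 1) ∣ (n - r) ∧ r + 1 < n - r ∧
      ∀ d, d ∣ n - r → d < n - r → d ≤ r + 1) := by
  have hrn : r ≤ n := by omega
  have hr1 : r + 1 ≤ n / 2 := by omega
  have hm2 : (n + 1) / 2 < n - r := by omega
  have memS : r ∈ S n ↔ ∃ k, k ∣ (n - r) ∧ r < k ∧ k ≤ n / 2 := mem_S_iff n r hrn
  have memS' : r + 1 ∈ S (n + 1) ↔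
      ∃ k, k ∣ (n - r) ∧ r + 1 < k ∧ k ≤ (n + 1) / 2 := by
    have h := mem_S_iff (n + 1) (r + 1) (by omega)
    have he : n + 1 - (r + 1) = n - r := Nat.succ_sub_succ n r
    rwa [he] at h
  constructor
  · rintro ⟨h1, h2⟩
    obtain ⟨k, hk, hk1, hk2⟩ := memS.mp h1
    have hmax : ∀ d, d ∣ n - r → d < n - r → d ≤ r + 1 := by
      intro d hd hdm
      by_contra hcon
      push_neg at hcon
      apply h2
      apply memS'.mpr
      refine ⟨d, hd, hcon, ?_⟩
      obtain ⟨e, he⟩ := hd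
      have he2 : 2 ≤ e := by
        rcases Nat.lt_or_ge e 2 with h | h
        · interval_cases e <;> omega
        · exact h
      have h2d : 2 * d ≤ d * e := by nlinarith
      clear memS memS' h1 h2 hcon
      omega
    have hkm : k < n - r := by omega
    have := hmax k hk hkm
    have hke : k = r + 1 := by omega
    subst hke
    exact ⟨hk, hkm, hmax⟩
  · rintro ⟨hd, hlt, hmax⟩
    constructor
    · exact memS.mpr ⟨r + 1, hd, by omega, hr1⟩
    · intro hmem
      obtain ⟨k, hk, hk1, hk2⟩ := memS'.mp hmem
      have hkm : k < n - r := by omega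
      have := hmax k hk hkm
      omega
end

section
/- Let n ≥ 4 be even. If n ≡ 2 (mod 3) then s(n+1) = s(n); otherwise s(n+1) = s(n) + 1. -/
lemma mem_S {n m : ℕ} : m ∈ S n ↔ ∃ k, 1 ≤ k ∧ k ≤ n / 2 ∧ n % k = m := by
  simp [S, Finset.mem_image, Finset.mem_Icc, and_assoc]

lemma res_bound {n k : ℕ} (h1 : 1 ≤ k) (h2 : k ≤ n / 2) :
    n % k + 2 * k ≤ n ∧ n % k < k := by
  have hlt : n % k < k := Nat.mod_lt _ h1
  have hdm := Nat.div_add_mod n k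
  have hq : 2 ≤ n / k := (Nat.le_div_iff_mul_le h1).mpr (by omega)
  have hmul : k * 2 ≤ k * (n / k) := Nat.mul_le_mul_left k hq
  omega

lemma back {n m : ℕ} (hn : 4 ≤ n) (hn2 : n % 2 = 0) (hm : m ∈ S n)
    (hne : n ≠ 3 * m + 2) : m + 1 ∈ S (n + 1) := by
  obtain ⟨k, hk1, hk2, hk⟩ := mem_S.mp hm
  obtain ⟨hb, hlt⟩ := res_bound hk1 hk2
  rw [hk] at hb hlt
  by_cases hcase : m + 2 ≤ k
  · refine mem_S.mpr ⟨k, hk1, by omega, ?_⟩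
    have h1k : 1 % k = 1 := Nat.mod_eq_of_lt (by omega)
    rw [Nat.add_mod, hk, h1k, Nat.mod_eq_of_lt (by omega)]
  · -- here k = m + 1, so (m+1) ∣ n - m; parity forces m even
    have hkm : k = m + 1 := by omega
    have hdm := Nat.div_add_mod n k
    rw [hk] at hdm
    have hme : m % 2 = 0 := by
      by_contra hodd
      have h2k : 2 ∣ k := by omega
      have h2x : 2 ∣ k * (n / k) := h2k.mul_right _
      omega
    have h34 : 3 * m + 4 ≤ n := by omega
    set k' := (n - m) / 2 with hk'
    have h2k' : 2 * k' = n - m := by omega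
    have hmod : n % k' = m := by
      have hn' : n = k' * 2 + m := by omega
      rw [hn', Nat.mul_add_mod]
      exact Nat.mod_eq_of_lt (by omega)
    refine mem_S.mpr ⟨k', by omega, by omega, ?_⟩
    have h1k : 1 % k' = 1 := Nat.mod_eq_of_lt (by omega)
    rw [Nat.add_mod, hmod, h1k, Nat.mod_eq_of_lt (by omega)]

lemma fwd {n x : ℕ} (hn : 4 ≤ n) (hn2 : n % 2 = 0) (hx : x ∈ S (n + 1)) :
    x = 0 ∨ ∃ m, m ∈ S n ∧ x = m + 1 ∧ (n % 3 = 2 → m ≠ (n - 2) / 3) := by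
  obtain ⟨k, hk1, hk2, hk⟩ := mem_S.mp hx
  have hk2' : k ≤ n / 2 := by omega
  obtain ⟨hb, hlt⟩ := res_bound hk1 hk2'
  by_cases hk1' : k = 1
  · left; subst hk1'; omega
  · by_cases hke : n % k = k - 1
    · left
      have h1k : 1 % k = 1 := Nat.mod_eq_of_lt (by omega)
      have h0 : (n + 1) % k = 0 := by
        rw [Nat.add_mod, hke, h1k]
        have hkk : k - 1 + 1 = k := by omega
        rw [hkk, Nat.mod_self]
      omega
    · right
      refine ⟨n % k, mem_S.mpr ⟨k, hk1, hk2', rfl⟩, ?_, ?_⟩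
      · have h1k : 1 % k = 1 := Nat.mod_eq_of_lt (by omega)
        rw [← hk, Nat.add_mod, h1k, Nat.mod_eq_of_lt (by omega)]
      · intro h3 hM
        have hdm := Nat.div_add_mod n k
        have hq : 2 ≤ n / k := (Nat.le_div_iff_mul_le (by omega)).mpr (by omega)
        have hmul : k * 2 ≤ k * (n / k) := Nat.mul_le_mul_left k hq
        omega

lemma M_mem {n : ℕ} (hn : 4 ≤ n) (hn2 : n % 2 = 0) (h3 : n % 3 = 2) :
    (n - 2) / 3 ∈ S n := by
  set M := (n - 2) / 3 with hM
  have h3M : 3 * M + 2 = n := by omega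
  refine mem_S.mpr ⟨M + 1, by omega, by omega, ?_⟩
  have hn' : n = (M + 1) * 2 + M := by omega
  rw [hn', Nat.mul_add_mod]
  exact Nat.mod_eq_of_lt (by omega)

lemma case1 {n : ℕ} (hn : 4 ≤ n) (hn2 : n % 2 = 0) (h3 : n % 3 ≠ 2) :
    S (n + 1) = insert 0 ((S n).image (· + 1)) := by
  ext x
  simp only [Finset.mem_insert, Finset.mem_image]
  constructor
  · intro hx
    rcases fwd hn hn2 hx with h0 | ⟨m, hm, hxm, -⟩
    · exact Or.inl h0
    · exact Or.inr ⟨m, hm, hxm.symm⟩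
  · rintro (rfl | ⟨m, hm, rfl⟩)
    · exact mem_S.mpr ⟨1, le_refl 1, by omega, by omega⟩
    · exact back hn hn2 hm (by omega)

lemma case2 {n : ℕ} (hn : 4 ≤ n) (hn2 : n % 2 = 0) (h3 : n % 3 = 2) :
    S (n + 1) = insert 0 (((S n).erase ((n - 2) / 3)).image (· + 1)) := by
  ext x
  simp only [Finset.mem_insert, Finset.mem_image, Finset.mem_erase]
  constructor
  · intro hx
    rcases fwd hn hn2 hx with h0 | ⟨m, hm, hxm, hne⟩
    · exact Or.inl h0
    · exact Or.inr ⟨m, ⟨hne h3, hm⟩, hxm.symm⟩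
  · rintro (rfl | ⟨m, ⟨hne, hm⟩, rfl⟩)
    · exact mem_S.mpr ⟨1, le_refl 1, by omega, by omega⟩
    · exact back hn hn2 hm (by omega)

theorem s_succ_even (n : ℕ) (hn : 4 ≤ n) (heven : Even n) :
    (n % 3 = 2 → s (n + 1) = s n) ∧ (n % 3 ≠ 2 → s (n + 1) = s n + 1) := by
  have hn2 : n % 2 = 0 := Nat.even_iff.mp heven
  have hinj : Function.Injective (· + 1 : ℕ → ℕ) := add_left_injective 1
  constructor
  · intro h3
    have hM := M_mem hn hn2 h3
    have hpos : 0 < (S n).card := Finset.card_pos.mpr ⟨_, hM⟩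
    have h0 : 0 ∉ (((S n).erase ((n - 2) / 3)).image (· + 1)) := by simp
    rw [s, s, case2 hn hn2 h3, Finset.card_insert_of_notMem h0,
      Finset.card_image_of_injective _ hinj, Finset.card_erase_of_mem hM]
    omega
  · intro h3
    have h0 : 0 ∉ ((S n).image (· + 1)) := by simp
    rw [s, s, case1 hn hn2 h3, Finset.card_insert_of_notMem h0,
      Finset.card_image_of_injective _ hinj]
end

section
/- For every n ≥ 1, s(n+1) = s(n) + 1 - |T(n)|, where T(n) = { r ∈ S(n) : r + 1 ∉ S(n+1) }. -/
def T (n : ℕ) : Finset ℕ := (S n).filter (fun r => r + 1 ∉ S (n + 1))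

lemma zero_mem_S_succ (n : ℕ) (hn : 1 ≤ n) : 0 ∈ S (n + 1) := by
  simp only [S, Finset.mem_image, Finset.mem_Icc]
  exact ⟨1, ⟨le_refl 1, by omega⟩, Nat.mod_one _⟩

lemma S_succ (n : ℕ) (hn : 1 ≤ n) :
    S (n + 1) = insert 0 (((S n).filter (fun r => r + 1 ∈ S (n + 1))).image (· + 1)) := by
  ext x
  constructor
  · intro hx
    rcases Nat.eq_zero_or_pos x with h0 | hpos
    · subst h0; exact Finset.mem_insert_self _ _
    · apply Finset.mem_insert_of_mem
      rw [Finset.mem_image]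
      obtain ⟨k, hk, hkx⟩ := Finset.mem_image.mp hx
      rw [Finset.mem_Icc] at hk
      have hk1 : 1 ≤ k := hk.1
      have hk2 : k ≤ (n + 1) / 2 := hk.2
      have hkn : k ≤ n / 2 := by
        by_contra h
        have h2k : n + 1 = 2 * k := by omega
        rw [h2k] at hkx
        rw [Nat.mul_mod_left] at hkx
        omega
      have hxk : x < k := by
        rw [← hkx]; exact Nat.mod_lt _ (by omega)
      have hmod : n % k = x - 1 := by
        have hd := Nat.div_add_mod (n + 1) k
        have hn' : n = k * ((n + 1) / k) + (x - 1) := by omega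
        rw [hn', Nat.mul_add_mod, Nat.mod_eq_of_lt (by omega)]
      refine ⟨x - 1, ?_, by omega⟩
      rw [Finset.mem_filter]
      constructor
      · rw [S, Finset.mem_image]
        exact ⟨k, Finset.mem_Icc.mpr ⟨hk1, hkn⟩, hmod⟩
      · have hx1 : x - 1 + 1 = x := by omega
        rw [hx1]; exact hx
  · intro hx
    rcases Finset.mem_insert.mp hx with h0 | hmem
    · subst h0; exact zero_mem_S_succ n hn
    · obtain ⟨r, hr, hrx⟩ := Finset.mem_image.mp hmem
      rw [Finset.mem_filter] at hr
      subst hrx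
      exact hr.2

theorem s_succ_eq (n : ℕ) (hn : 1 ≤ n) :
    (s (n + 1) : ℤ) = s n + 1 - (T n).card := by
  have hcard := Finset.card_filter_add_card_filter_not
    (s := S n) (p := fun r => r + 1 ∈ S (n + 1))
  have hS := S_succ n hn
  have h0 : (0 : ℕ) ∉ ((S n).filter (fun r => r + 1 ∈ S (n + 1))).image (· + 1) := by
    simp
  have h1 : s (n + 1) = ((S n).filter (fun r => r + 1 ∈ S (n + 1))).card + 1 := by
    rw [s]
    conv_lhs => rw [hS]
    rw [Finset.card_insert_of_notMem h0,
      Finset.card_image_of_injective _ (fun a b h => by omega)]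
  have h2 : ((S n).filter (fun r => r + 1 ∈ S (n + 1))).card + (T n).card = s n := by
    simpa [T, s] using hcard
  omega
end

section
/- There exists a constant C such that for all odd n ≥ 3, the number of elements r of S(n) with r + 1 ∉ S(n+1) is at most C · log(log n); consequently s(n) - s(n+1) = O(log log n). -/
/-- Set of "catching" primes for `m = n+1`. -/
def Q (m : ℕ) : Finset ℕ :=
  (Finset.range (m + 1)).filter (fun q => q.Prime ∧ (q + 1) ∣ m ∧
    ∀ p ∈ Finset.range (m + 1), p.Prime → p ∣ m / (q + 1) → q ≤ p)

lemma key {n r : ℕ} (hn : 3 ≤ n) (hr : r ∈ S n)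
    (hbad : r + 1 ∉ S (n + 1)) :
    ((n + 1) / (r + 1) - 1) ∈ Q (n + 1) ∧
      (r + 1) * (((n + 1) / (r + 1) - 1) + 1) = n + 1 := by
  obtain ⟨k, hk, hmod⟩ := Finset.mem_image.mp hr
  rw [Finset.mem_Icc] at hk
  obtain ⟨hk1, hk2⟩ := hk
  have hkpos : 0 < k := hk1
  have hrk : r < k := hmod ▸ Nat.mod_lt n hkpos
  -- first: r + 1 = k
  have hkk : r + 1 = k := by
    by_contra h
    have hlt : r + 1 < k := by omega
    apply hbad
    apply Finset.mem_image.mpr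
    refine ⟨k, Finset.mem_Icc.mpr ⟨hk1, hk2.trans (Nat.div_le_div_right (by omega))⟩, ?_⟩
    have h1 : 1 % k = 1 := Nat.mod_eq_of_lt (by omega)
    rw [Nat.add_mod, hmod, h1, Nat.mod_eq_of_lt hlt]
  subst hkk
  have hdvd : (r + 1) ∣ (n + 1) := by
    have h := Nat.div_add_mod n (r + 1)
    rw [hmod] at h
    exact ⟨n / (r + 1) + 1, by rw [Nat.mul_add, Nat.mul_one]; linarith⟩
  obtain ⟨t, ht⟩ := hdvd
  have hdiv : (n + 1) / (r + 1) = t := by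
    rw [ht]; exact Nat.mul_div_cancel_left t (by omega)
  rw [hdiv]
  have h2 : 2 * (r + 1) ≤ n := by
    have := Nat.div_mul_le_self n 2
    omega
  have ht3 : 3 ≤ t := by
    by_contra h
    push_neg at h
    interval_cases t <;> omega
  obtain ⟨q, rfl⟩ : ∃ q, t = q + 1 := ⟨t - 1, by omega⟩
  simp only [Nat.add_sub_cancel]
  have hq2 : 2 ≤ q := by omega
  have hexp : n + 1 = (r + 1) * q + (r + 1) := by rw [ht]; ring
  -- main claim: every prime factor of (r+1)*q is at least q
  have hmain : ∀ p : ℕ, p.Prime → p ∣ (r + 1) * q → q ≤ p := by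
    intro p pp pd
    by_contra hcon
    push_neg at hcon
    obtain ⟨d, hd⟩ := pd
    have hp2 : 2 ≤ p := pp.two_le
    have hdpos : 0 < d := by
      rcases Nat.eq_zero_or_pos d with h | h
      · rw [h, Nat.mul_zero] at hd; nlinarith
      · exact h
    have hdk : r + 1 < d := by
      by_contra h
      push_neg at h
      nlinarith
    have hdm : d ≤ (n + 1) / 2 := by
      rw [Nat.le_div_iff_mul_le (by norm_num)]
      have e1 : d * 2 ≤ d * p := Nat.mul_le_mul_left d hp2
      have e2 : d * p ≤ n + 1 := by
        rw [Nat.mul_comm, ← hd]; linarith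
      linarith
    apply hbad
    apply Finset.mem_image.mpr
    refine ⟨d, Finset.mem_Icc.mpr ⟨by omega, hdm⟩, ?_⟩
    have hsum : n + 1 = (r + 1) + d * p := by
      rw [Nat.mul_comm d p, ← hd]; linarith
    rw [hsum, Nat.add_mul_mod_self_left, Nat.mod_eq_of_lt hdk]
  have hqprime : q.Prime := by
    rw [Nat.prime_def_minFac]
    refine ⟨hq2, ?_⟩
    have h1 : q.minFac ∣ (r + 1) * q := Dvd.dvd.mul_left (Nat.minFac_dvd q) _
    have h2 := hmain q.minFac (Nat.minFac_prime (by omega)) h1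
    have h3 : q.minFac ≤ q := Nat.minFac_le (by omega)
    omega
  have hdvdq : (q + 1) ∣ (n + 1) := ⟨r + 1, by rw [ht]; ring⟩
  have hdivq : (n + 1) / (q + 1) = r + 1 := by
    rw [ht, Nat.mul_comm, Nat.mul_div_cancel_left _ (by omega : 0 < q + 1)]
  refine ⟨?_, by rw [ht]⟩
  unfold Q
  apply Finset.mem_filter.mpr
  refine ⟨Finset.mem_range.mpr (by nlinarith), hqprime, hdvdq, ?_⟩
  intro p _ pp pdvd
  rw [hdivq] at pdvd
  exact hmain p pp (Dvd.dvd.mul_right pdvd q)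

lemma growth {m q q' : ℕ} (hm : 1 ≤ m) (hq : q ∈ Q m) (hq' : q' ∈ Q m) (h3 : 3 ≤ q)
    (hlt : q < q') : q * q ≤ q' := by
  rw [Q, Finset.mem_filter] at hq hq'
  obtain ⟨-, hprime, hdvd, hcond⟩ := hq
  obtain ⟨-, hprime', hdvd', hcond'⟩ := hq'
  obtain ⟨k', hk'⟩ := hdvd'
  have hk'pos : 0 < k' := by
    rcases Nat.eq_zero_or_pos k' with h | h
    · rw [h, Nat.mul_zero] at hk'; omega
    · exact h
  have hk'div : m / (q' + 1) = k' := by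
    rw [hk']; exact Nat.mul_div_cancel_left k' (by omega)
  have hk'le : k' ≤ m := Nat.le_of_dvd hm ⟨q' + 1, by rw [hk']; ring⟩
  -- q' ≥ q + 2
  have hqodd : Odd q := hprime.odd_of_ne_two (by omega)
  have hne : q' ≠ q + 1 := by
    intro h
    have heven : Even q' := by rw [h]; exact Odd.add_one hqodd
    have := (Nat.Prime.even_iff hprime').mp heven
    omega
  have hlt2 : q + 1 < q' := by omega
  -- coprimality
  have hco : Nat.Coprime (q + 1) k' := by
    by_contra h
    obtain ⟨p, pp, hp1, hp2⟩ := Nat.Prime.not_coprime_iff_dvd.mp h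
    have h1 : p ≤ q + 1 := Nat.le_of_dvd (by omega) hp1
    have hpk : p ≤ k' := Nat.le_of_dvd hk'pos hp2
    have h2 : q' ≤ p := by
      apply hcond' p (Finset.mem_range.mpr (by omega)) pp
      rw [hk'div]; exact hp2
    omega
  have hdvd12 : (q + 1) ∣ (q' + 1) := by
    apply hco.dvd_of_dvd_mul_right
    rw [← hk']; exact hdvd
  obtain ⟨c, hc⟩ := hdvd12
  have hc2 : 2 ≤ c := by
    by_contra h
    push_neg at h
    interval_cases c <;> omega
  have hm2 : m = (q + 1) * (c * k') := by rw [hk', hc]; ring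
  have hkk : m / (q + 1) = c * k' := by
    rw [hm2]; exact Nat.mul_div_cancel_left _ (by omega)
  have hcm : c ≤ m := Nat.le_of_dvd hm ⟨(q + 1) * k', by rw [hm2]; ring⟩
  have hpp := Nat.minFac_prime (show c ≠ 1 by omega)
  have hple : c.minFac ≤ c := Nat.minFac_le (by omega)
  have hqle : q ≤ c.minFac := by
    apply hcond c.minFac (Finset.mem_range.mpr (by omega)) hpp
    rw [hkk]
    exact Dvd.dvd.mul_right (Nat.minFac_dvd c) k'
  have hcq : q ≤ c := hqle.trans hple
  nlinarith

lemma card_Q (m : ℕ) (hm : 1 ≤ m) : (Q m).card ≤ Nat.log 2 (Nat.log 2 m) + 2 := by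
  classical
  set f : ℕ → ℕ := fun q => Nat.log 2 (Nat.log 2 q) with hf
  set Q' : Finset ℕ := (Q m).erase 2 with hQ'
  have hsub : Q m ⊆ insert 2 Q' := by
    intro x hx
    by_cases h : x = 2
    · simp [h]
    · exact Finset.mem_insert_of_mem (Finset.mem_erase.mpr ⟨h, hx⟩)
  have hmono : ∀ a ∈ Q', ∀ b ∈ Q', a < b → f a < f b := by
    intro a ha b hb hab
    have haQ : a ∈ Q m := Finset.mem_of_mem_erase ha
    have hbQ : b ∈ Q m := Finset.mem_of_mem_erase hb
    have ha2 : a ≠ 2 := (Finset.mem_erase.mp ha).1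
    have haprime : a.Prime := (Finset.mem_filter.mp haQ).2.1
    have ha3 : 3 ≤ a := by have := haprime.two_le; omega
    have hgrow : a * a ≤ b := growth hm haQ hbQ ha3 hab
    have hLa : 1 ≤ Nat.log 2 a := Nat.log_pos (by norm_num) (by omega)
    have h1 : 2 ^ Nat.log 2 a ≤ a := Nat.pow_log_le_self 2 (by omega)
    have h2 : 2 ^ (2 * Nat.log 2 a) ≤ b := by
      rw [two_mul, pow_add]
      exact le_trans (Nat.mul_le_mul h1 h1) hgrow
    have h3 : 2 * Nat.log 2 a ≤ Nat.log 2 b := by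
      calc 2 * Nat.log 2 a = Nat.log 2 (2 ^ (2 * Nat.log 2 a)) :=
            (Nat.log_pow (by norm_num) _).symm
        _ ≤ Nat.log 2 b := Nat.log_mono_right h2
    have h4 : Nat.log 2 (Nat.log 2 a * 2) ≤ Nat.log 2 (Nat.log 2 b) :=
      Nat.log_mono_right (by omega)
    rw [Nat.log_mul_base (by norm_num) (by omega)] at h4
    simp only [hf]
    omega
  have hQQ' : Q'.card ≤ Nat.log 2 (Nat.log 2 m) + 1 := by
    have : Q'.card ≤ (Finset.range (Nat.log 2 (Nat.log 2 m) + 1)).card := by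
      apply Finset.card_le_card_of_injOn f
      · intro a ha
        have haQ : a ∈ Q m := Finset.mem_of_mem_erase ha
        have : a ≤ m := by
          have := (Finset.mem_filter.mp haQ).1
          rw [Finset.mem_range] at this
          omega
        apply Finset.mem_range.mpr
        have : f a ≤ Nat.log 2 (Nat.log 2 m) :=
          Nat.log_mono_right (Nat.log_mono_right this)
        omega
      · intro a ha b hb h
        by_contra hne
        rcases lt_or_gt_of_ne hne with h' | h'
        · exact absurd h (Nat.ne_of_lt (hmono a (Finset.mem_coe.mp ha) b (Finset.mem_coe.mp hb) h'))
        · exact absurd h.symm (Nat.ne_of_lt (hmono b (Finset.mem_coe.mp hb) a (Finset.mem_coe.mp ha) h'))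
    simpa using this
  calc (Q m).card ≤ (insert 2 Q').card := Finset.card_le_card hsub
    _ ≤ Q'.card + 1 := Finset.card_insert_le _ _
    _ ≤ Nat.log 2 (Nat.log 2 m) + 2 := by omega

lemma real_bound {n : ℕ} (hn : 3 ≤ n) :
    ((Nat.log 2 (Nat.log 2 (n + 1)) + 2 : ℕ) : ℝ) ≤ 400 * Real.log (Real.log n) := by
  have hl2 : (0.6931471803 : ℝ) < Real.log 2 := Real.log_two_gt_d9
  have hl2' : Real.log 2 < 0.6931471808 := Real.log_two_lt_d9
  have hlog32 : (1/3 : ℝ) ≤ Real.log (3/2) := by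
    have h := Real.log_le_sub_one_of_pos (show (0:ℝ) < 2/3 by norm_num)
    have h2 : Real.log (3/2) = - Real.log (2/3) := by
      rw [← Real.log_inv]; norm_num
    rw [h2]; linarith
  have hlog3 : (1.02 : ℝ) ≤ Real.log 3 := by
    have h : Real.log 3 = Real.log 2 + Real.log (3/2) := by
      rw [← Real.log_mul (by norm_num) (by norm_num)]; norm_num
    linarith
  have hn3 : (3:ℝ) ≤ (n:ℝ) := by exact_mod_cast hn
  have hln3 : Real.log 3 ≤ Real.log n := Real.log_le_log (by norm_num) hn3
  have hlnn : (1.02 : ℝ) ≤ Real.log n := le_trans hlog3 hln3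
  have ht : (1/60 : ℝ) ≤ Real.log (Real.log n) := by
    have h := Real.log_le_sub_one_of_pos (show (0:ℝ) < (Real.log n)⁻¹ by positivity)
    have h2 : Real.log (Real.log n) = - Real.log (Real.log n)⁻¹ := by
      rw [Real.log_inv]; ring
    have h3 : (Real.log n)⁻¹ ≤ 1/1.02 := by
      rw [inv_le_comm₀ (by linarith) (by norm_num)]
      linarith
    rw [h2]; linarith
  have ht0 : (0:ℝ) ≤ Real.log (Real.log n) := le_trans (by norm_num) ht
  set A := Nat.log 2 (n + 1) with hAdef
  have hA : (A : ℝ) ≤ 4 * Real.log n := by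
    have h1 : (2:ℕ) ^ A ≤ n + 1 := Nat.pow_log_le_self 2 (by omega)
    have h1' : ((2:ℝ)) ^ (A:ℕ) ≤ ((n:ℝ) + 1) := by exact_mod_cast h1
    have h2 : (A : ℝ) * Real.log 2 ≤ Real.log ((n:ℝ) + 1) := by
      have := Real.log_le_log (show (0:ℝ) < 2 ^ A by positivity) h1'
      rwa [Real.log_pow] at this
    have h3 : Real.log ((n:ℝ) + 1) ≤ 2 * Real.log n := by
      have hsq : ((n:ℝ) + 1) ≤ (n:ℝ) ^ 2 := by nlinarith
      calc Real.log ((n:ℝ) + 1) ≤ Real.log ((n:ℝ) ^ 2) :=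
            Real.log_le_log (by linarith) hsq
        _ = 2 * Real.log n := by rw [Real.log_pow]; norm_num
    have hA0 : (0:ℝ) ≤ (A:ℝ) := Nat.cast_nonneg A
    nlinarith
  rcases Nat.lt_or_ge A 2 with hA2 | hA2
  · have hz : Nat.log 2 A = 0 := by
      interval_cases A <;> simp
    rw [hz]
    push_cast
    linarith
  · have hB : ((Nat.log 2 A : ℕ) : ℝ) * Real.log 2 ≤ Real.log A := by
      have h1 : (2:ℕ) ^ Nat.log 2 A ≤ A := Nat.pow_log_le_self 2 (by omega)
      have h1' : ((2:ℝ)) ^ (Nat.log 2 A) ≤ (A:ℝ) := by exact_mod_cast h1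
      have := Real.log_le_log (show (0:ℝ) < 2 ^ Nat.log 2 A by positivity) h1'
      rwa [Real.log_pow] at this
    have hApos : (0:ℝ) < (A:ℝ) := by
      have : (2:ℝ) ≤ (A:ℝ) := by exact_mod_cast hA2
      linarith
    have h4 : Real.log A ≤ Real.log (4 * Real.log n) := Real.log_le_log hApos hA
    have h5 : Real.log (4 * Real.log n) = Real.log 4 + Real.log (Real.log n) :=
      Real.log_mul (by norm_num) (by linarith)
    have hlog4 : Real.log 4 ≤ 1.4 := by
      have h : Real.log 4 = 2 * Real.log 2 := by
        rw [show (4:ℝ) = 2 ^ 2 by norm_num, Real.log_pow]; norm_num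
      linarith
    have hB0 : (0:ℝ) ≤ ((Nat.log 2 A : ℕ) : ℝ) := Nat.cast_nonneg _
    have hB' : ((Nat.log 2 A : ℕ) : ℝ) * 0.6931471803 ≤ 1.4 + Real.log (Real.log n) := by
      nlinarith
    push_cast
    linarith
  
theorem diff_bound_loglog :
    ∃ C : ℝ, ∀ n : ℕ, 3 ≤ n → Odd n →
      (((S n).filter (fun r => r + 1 ∉ S (n + 1))).card : ℝ)
          ≤ C * Real.log (Real.log n) ∧
      (s n : ℝ) - s (n + 1) ≤ C * Real.log (Real.log n) := by
  classical
  refine ⟨400, fun n hn _ => ?_⟩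
  set bad := (S n).filter (fun r => r + 1 ∉ S (n + 1)) with hbaddef
  have hbadQ : bad.card ≤ (Q (n + 1)).card := by
    apply Finset.card_le_card_of_injOn (fun r => (n + 1) / (r + 1) - 1)
    · intro r hr
      obtain ⟨hr1, hr2⟩ := Finset.mem_filter.mp hr
      exact (key hn hr1 hr2).1
    · intro a ha b hb h
      obtain ⟨ha1, ha2⟩ := Finset.mem_filter.mp (Finset.mem_coe.mp ha)
      obtain ⟨hb1, hb2⟩ := Finset.mem_filter.mp (Finset.mem_coe.mp hb)
      have hA := (key hn ha1 ha2).2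
      have hB := (key hn hb1 hb2).2
      simp only at h
      rw [h] at hA
      have := hA.trans hB.symm
      have hpos : 0 < (n + 1) / (b + 1) - 1 + 1 := by omega
      have := Nat.eq_of_mul_eq_mul_right hpos this
      omega
  have hcard : bad.card ≤ Nat.log 2 (Nat.log 2 (n + 1)) + 2 :=
    hbadQ.trans (card_Q (n + 1) (by omega))
  have hreal : (bad.card : ℝ) ≤ 400 * Real.log (Real.log n) := by
    calc (bad.card : ℝ) ≤ ((Nat.log 2 (Nat.log 2 (n + 1)) + 2 : ℕ) : ℝ) := by
          exact_mod_cast hcard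
      _ ≤ 400 * Real.log (Real.log n) := real_bound hn
  refine ⟨hreal, ?_⟩
  have hsplit : ((S n).filter (fun r => r + 1 ∈ S (n + 1))).card + bad.card = s n := by
    rw [hbaddef, s]
    exact Finset.card_filter_add_card_filter_not _
  have hgood : ((S n).filter (fun r => r + 1 ∈ S (n + 1))).card ≤ s (n + 1) := by
    apply Finset.card_le_card_of_injOn (fun r => r + 1)
    · intro r hr
      exact (Finset.mem_filter.mp hr).2
    · intro a _ b _ h
      simpa using h
  have : s n ≤ bad.card + s (n + 1) := by
    rw [← hsplit, Nat.add_comm]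
    exact Nat.add_le_add_left hgood _
  have hcast : (s n : ℝ) ≤ (bad.card : ℝ) + (s (n + 1) : ℝ) := by exact_mod_cast this
  linarith
end

section
/- For n ≥ 2: 0 ∈ S(n) always, and 1 ∈ S(n+1) if and only if n is composite; hence 0 ∈ S(n) with 1 ∉ S(n+1) holds if and only if n is prime. -/
lemma zero_mem_S (n : ℕ) (hn : 2 ≤ n) : 0 ∈ S n := by
  simp only [S, Finset.mem_image, Finset.mem_Icc]
  exact ⟨1, ⟨le_refl 1, by omega⟩, Nat.mod_one n⟩

lemma one_mem_iff (n : ℕ) (hn : 2 ≤ n) : 1 ∈ S (n + 1) ↔ ¬ n.Prime := by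
  simp only [S, Finset.mem_image, Finset.mem_Icc]
  constructor
  · rintro ⟨k, ⟨hk1, hk2⟩, hmod⟩ hp
    have hk2' : 2 ≤ k := by
      by_contra h
      have hk : k = 1 := by omega
      subst hk
      simp [Nat.mod_one] at hmod
    have hdvd : k ∣ n := by
      have h1 : k ∣ (n + 1 - (n + 1) % k) := Nat.dvd_sub_mod _
      rwa [hmod] at h1
      
    rcases (Nat.Prime.eq_one_or_self_of_dvd hp k hdvd) with h | h
    · omega
    · omega
  · intro hp
    set p := n.minFac with hpdef
    have hpp : p.Prime := Nat.minFac_prime (by omega)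
    have hpd : p ∣ n := Nat.minFac_dvd n
    set d := n / p with hddef
    have hdd : d ∣ n := Nat.div_dvd_of_dvd hpd
    have hd0 : 0 < d := Nat.div_pos (Nat.minFac_le (by omega)) hpp.pos
    have hd1 : d ≠ 1 := by
      intro h
      have := Nat.div_mul_cancel hpd
      rw [← hddef, h, one_mul] at this
      exact hp (this ▸ hpp)
    have hd2 : 2 ≤ d := by
      rcases Nat.lt_or_ge d 2 with h | h
      · interval_cases d
        · exact absurd rfl hd1
      · exact h
    have hdle : d ≤ n / 2 := by
      exact Nat.div_le_div_left hpp.two_le two_pos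
    refine ⟨d, ⟨by omega, by omega⟩, ?_⟩
    obtain ⟨m, hm⟩ := hdd
    rw [hm]
    rw [Nat.add_mod, Nat.mul_mod_right]
    simp [Nat.mod_eq_of_lt (show 1 < d by omega)]

theorem zero_and_one_mem (n : ℕ) (hn : 2 ≤ n) :
    0 ∈ S n ∧ (1 ∈ S (n + 1) ↔ ¬ n.Prime) ∧
    ((0 ∈ S n ∧ 1 ∉ S (n + 1)) ↔ n.Prime) := by
  have h0 := zero_mem_S n hn
  have h1 := one_mem_iff n hn
  refine ⟨h0, h1, ?_⟩
  constructor
  · rintro ⟨-, h⟩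
    by_contra hp
    exact h (h1.mpr hp)
  · intro hp
    exact ⟨h0, fun h => (h1.mp h) hp⟩
end

section
/- If n ≡ 2 (mod 3) and n ≥ 5, then r = (n-2)/3 satisfies r ∈ S(n) and r + 1 ∉ S(n+1). -/
theorem special_r_not_transferred (n : ℕ) (hn : 5 ≤ n) (hmod : n % 3 = 2) :
    (n - 2) / 3 ∈ S n ∧ (n - 2) / 3 + 1 ∉ S (n + 1) := by
  set r := (n - 2) / 3 with hr
  have hn3 : n = 3 * r + 2 := by omega
  have hr1 : 1 ≤ r := by omega
  constructor
  · simp only [S, Finset.mem_image, Finset.mem_Icc]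
    refine ⟨r + 1, ⟨by omega, by omega⟩, ?_⟩
    have h : n = r + 2 * (r + 1) := by omega
    rw [h, Nat.add_mul_mod_self_right, Nat.mod_eq_of_lt (by omega)]
  · simp only [S, Finset.mem_image, Finset.mem_Icc]
    rintro ⟨k, ⟨hk1, hk2⟩, heq⟩
    have hklt : r + 1 < k := by
      have := Nat.mod_lt (n + 1) (show 0 < k by omega)
      omega
    have hdm := Nat.div_add_mod (n + 1) k
    set q := (n + 1) / k with hq
    rw [heq] at hdm
    -- k * q + (r+1) = n+1 = 3r+3, so k*q = 2(r+1)
    have hkq : k * q = 2 * (r + 1) := by omega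
    have hq2 : q < 2 := by
      by_contra h
      push_neg at h
      have : k * 2 ≤ k * q := Nat.mul_le_mul_left k h
      nlinarith
    have hq1 : 1 ≤ q := by
      rcases Nat.eq_zero_or_pos q with h | h
      · simp [h] at hkq
      · exact h
    have : q = 1 := by omega
    simp only [this, Nat.mul_one] at hkq
    omega
end

section
/- For all j ≥ 0 and n ≥ 1, every element of S_j(n) is at most n/(j+2); in particular s_j(n) - 1 ≤ n/(j+2). -/
def Sit : ℕ → ℕ → Finset ℕ
  | 0, n => Finset.Icc 1 (n / 2)
  | j + 1, n => ((Sit j n).erase 0).image (fun k => n % k)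

lemma Sit_elem_bound : ∀ j n : ℕ, 1 ≤ n → ∀ r ∈ Sit j n, (r : ℝ) ≤ n / (j + 2) := by
  intro j
  induction j with
  | zero =>
    intro n hn r hr
    simp only [Sit, Finset.mem_Icc] at hr
    calc (r : ℝ) ≤ ((n / 2 : ℕ) : ℝ) := by exact_mod_cast hr.2
      _ ≤ (n : ℝ) / 2 := Nat.cast_div_le
      _ = (n : ℝ) / ((0 : ℕ) + 2) := by norm_num
  | succ j ih =>
    intro n hn r hr
    simp only [Sit, Finset.mem_image, Finset.mem_erase] at hr
    obtain ⟨k, ⟨hk0, hk⟩, rfl⟩ := hr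
    have hkb : (k : ℝ) ≤ n / (j + 2) := ih n hn k hk
    have hj3 : (0:ℝ) < (j:ℝ) + 3 := by positivity
    have hj2 : (0:ℝ) < (j:ℝ) + 2 := by positivity
    have hcast : ((j + 1 : ℕ) : ℝ) + 2 = (j : ℝ) + 3 := by push_cast; ring
    rw [hcast]
    have hmk : n % k < k := Nat.mod_lt n (Nat.pos_of_ne_zero hk0)
    have hmk' : ((n % k : ℕ) : ℝ) < (k : ℝ) := by exact_mod_cast hmk
    by_cases hcase : (k : ℝ) ≤ (n : ℝ) / ((j:ℝ) + 3)
    · linarith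
    · push_neg at hcase
      have hkn : (k : ℝ) * ((j:ℝ) + 2) ≤ n := (le_div_iff₀ hj2).1 hkb
      have hkn' : k * (j + 2) ≤ n := by exact_mod_cast hkn
      have hdiv : j + 2 ≤ n / k := by
        rw [Nat.le_div_iff_mul_le (Nat.pos_of_ne_zero hk0)]
        linarith [hkn']
      have heq : n % k = n - k * (n / k) := by
        have := Nat.mod_add_div n k
        omega
      have hmod : n % k ≤ n - k * (j + 2) := by
        rw [heq]
        exact Nat.sub_le_sub_left (Nat.mul_le_mul_left k hdiv) n
      have hmodR : ((n % k : ℕ) : ℝ) ≤ (n : ℝ) - (k : ℝ) * ((j:ℝ) + 2) := by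
        have h1 : ((n - k * (j + 2) : ℕ) : ℝ) = (n : ℝ) - (k : ℝ) * ((j:ℝ) + 2) := by
          push_cast [Nat.cast_sub hkn']
          ring
        calc ((n % k : ℕ) : ℝ) ≤ ((n - k * (j + 2) : ℕ) : ℝ) := by exact_mod_cast hmod
          _ = _ := h1
      rw [div_lt_iff₀ hj3] at hcase
      rw [le_div_iff₀ hj3]
      nlinarith [hmodR, hcase]

theorem iter_upper_bound (j n : ℕ) (hn : 1 ≤ n) :
    (∀ r ∈ Sit j n, (r : ℝ) ≤ n / (j + 2)) ∧
    ((Sit j n).card : ℝ) - 1 ≤ n / (j + 2) := by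
  refine ⟨Sit_elem_bound j n hn, ?_⟩
  have hsub : Sit j n ⊆ Finset.range (n / (j + 2) + 1) := by
    intro r hr
    have h := Sit_elem_bound j n hn r hr
    have hj2 : (0:ℝ) < (j:ℝ) + 2 := by positivity
    rw [le_div_iff₀ hj2] at h
    have : r * (j + 2) ≤ n := by exact_mod_cast h
    have : r ≤ n / (j + 2) := (Nat.le_div_iff_mul_le (by omega)).2 this
    simp [Finset.mem_range]; omega
  have hcard : (Sit j n).card ≤ n / (j + 2) + 1 := by
    calc (Sit j n).card ≤ (Finset.range (n / (j + 2) + 1)).card := Finset.card_le_card hsub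
      _ = n / (j + 2) + 1 := by simp
  have h1 : ((Sit j n).card : ℝ) ≤ ((n / (j + 2) : ℕ) : ℝ) + 1 := by exact_mod_cast hcard
  have h2 : ((n / (j + 2) : ℕ) : ℝ) ≤ (n : ℝ) / ((j : ℕ) + 2 : ℕ) := Nat.cast_div_le
  push_cast at h2
  linarith
end
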